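/- arXiv:2308.05073 — 2 statements merged into one kernel-verified Lean document; each statement's English description precedes it below -/
import Mathlib

section
/- Let Σ be positive definite, π ∈ ℝ^K with πᵀΣπ > 0, c = (πᵀΣπ)⁻¹, λ ≥ 0. Define θ̂ʰ = (Σ⁻¹ + λππᵀ)⁻¹ (Σ⁻¹ θ̂ + λ θ̂ʳ π). Then θ̂ʰ = θ̂ + c·(λ/(λ+c))·(θ̂ʳ − πᵀθ̂)·Σπ. -/
/-!
Write `A = Σ⁻¹ + λ ππᵀ` and `q = πᵀΣπ = c⁻¹`. Applying `A` to `θ̂ + s Σπ` gives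
`Σ⁻¹θ̂ + (λ πᵀθ̂ + s (1 + λq)) π`, so `A (θ̂ + s Σπ)` is the harmonized right-hand side exactly when
`s (1 + λq) = λ (θ̂ʳ - πᵀθ̂)`, and `λ / (1 + λq) = c λ / (λ + c)`. By the matrix determinant
lemma `det A = det Σ⁻¹ · (1 + λq)`, which is nonzero since `λ ≥ 0` and `q > 0`, so `A⁻¹` undoes `A`.
-/

open Matrix

namespace Matrix

variable {n R : Type*} [Fintype n] [DecidableEq n] [CommRing R]

theorem det_add_smul_vecMulVec {A : Matrix n n R} (hA : IsUnit A.det) (a : R) (u v : n → R) :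
    (A + a • vecMulVec u v).det = A.det * (1 + a * (v ⬝ᵥ A⁻¹ *ᵥ u)) := by
  rw [← smul_vecMulVec, vecMulVec_eq Unit, det_add_replicateCol_mul_replicateRow hA,
    det_unique (1 + _), Matrix.mul_assoc, ← replicateCol_mulVec, mulVec_smul,
    add_apply, one_apply_eq, replicateRow_mul_replicateCol_apply, dotProduct_smul, smul_eq_mul]

theorem inv_mulVec_eq_of_mulVec_eq {A : Matrix n n R} (hA : IsUnit A.det) {x b : n → R}
    (h : A *ᵥ x = b) : A⁻¹ *ᵥ b = x := by
  rw [← h, mulVec_mulVec, nonsing_inv_mul _ hA, one_mulVec]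

theorem inv_add_smul_vecMulVec_mulVec_add_smul_mulVec {S : Matrix n n R} (hS : IsUnit S.det)
    (a r : R) (u v x : n → R) {s : R}
    (hs : s * (1 + a * (v ⬝ᵥ S *ᵥ u)) = a * (r - v ⬝ᵥ x)) :
    (S⁻¹ + a • vecMulVec u v) *ᵥ (x + s • (S *ᵥ u)) = S⁻¹ *ᵥ x + (a * r) • u := by
  rw [add_mulVec, mulVec_add, mulVec_add, mulVec_smul, mulVec_mulVec, nonsing_inv_mul _ hS,
    one_mulVec, smul_mulVec, smul_mulVec, vecMulVec_mulVec, vecMulVec_mulVec]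
  ext i
  simp only [Pi.add_apply, Pi.smul_apply, smul_eq_mul, MulOpposite.smul_eq_mul_unop,
    MulOpposite.unop_op, dotProduct_smul]
  linear_combination u i * hs

theorem inv_add_smul_vecMulVec_mulVec {𝕜 : Type*} [Field 𝕜] {S : Matrix n n 𝕜}
    (hS : IsUnit S.det) {a : 𝕜} {u v : n → 𝕜} (hdet : 1 + a * (v ⬝ᵥ S *ᵥ u) ≠ 0)
    (x : n → 𝕜) (r : 𝕜) :
    (S⁻¹ + a • vecMulVec u v)⁻¹ *ᵥ (S⁻¹ *ᵥ x + (a * r) • u) =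
      x + (a * (r - v ⬝ᵥ x) / (1 + a * (v ⬝ᵥ S *ᵥ u))) • (S *ᵥ u) := by
  have hA : IsUnit (S⁻¹ + a • vecMulVec u v).det := by
    rw [det_add_smul_vecMulVec (isUnit_nonsing_inv_det S hS), nonsing_inv_nonsing_inv S hS]
    exact (isUnit_nonsing_inv_det S hS).mul hdet.isUnit
  exact inv_mulVec_eq_of_mulVec_eq hA
    (inv_add_smul_vecMulVec_mulVec_add_smul_mulVec hS a r u v x (div_mul_cancel₀ _ hdet))

end Matrix

/-- The harmonized estimator as a shift of the initial estimate in direction `Σπ`. -/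
theorem harmonized_shift_form {K : ℕ}
    (Sig : Matrix (Fin K) (Fin K) ℝ) (hSig : Sig.PosDef)
    (π θhat : Fin K → ℝ) (hπSπ : 0 < π ⬝ᵥ (Sig *ᵥ π))
    (θr : ℝ) (lam : ℝ) (hlam : 0 ≤ lam) :
    let c : ℝ := (π ⬝ᵥ (Sig *ᵥ π))⁻¹
    (Sig⁻¹ + lam • vecMulVec π π)⁻¹ *ᵥ (Sig⁻¹ *ᵥ θhat + (lam * θr) • π) =
      θhat + (c * (lam / (lam + c)) * (θr - π ⬝ᵥ θhat)) • (Sig *ᵥ π) := by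
  dsimp only
  have hdet : 1 + lam * (π ⬝ᵥ Sig *ᵥ π) ≠ 0 := by positivity
  rw [inv_add_smul_vecMulVec_mulVec hSig.det_pos.ne'.isUnit hdet]
  congr 2
  field_simp
  ring
end

section
/- Suppose E(θ̂ʳ) = πᵀθ and E(θ̂) = θ + ψ for a fixed bias vector ψ ∈ ℝ^K. If Σ is positive definite with Σπ = κψ for some κ ≠ 0, and πᵀψ ≠ 0, then the fully harmonized estimator θ̂ʰ = θ̂ − (πᵀθ̂ − θ̂ʳ)(πᵀΣπ)⁻¹Σπ is unbiased: E(θ̂ʰ) = θ. -/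
open Matrix MeasureTheory

/-- Bias-directed harmonization: if `Σπ ∝ ψ` (the bias of `θ̂`), the fully
harmonized estimator is unbiased. -/
theorem bd_harmonized_unbiased {K : ℕ} {Ω : Type*} [MeasurableSpace Ω]
    (μ : Measure Ω) [IsProbabilityMeasure μ]
    (θ ψ π : Fin K → ℝ) (θhat : Ω → Fin K → ℝ) (θr : Ω → ℝ)
    (hint : ∀ k, Integrable (fun ω => θhat ω k) μ) (hintr : Integrable θr μ)
    (hEr : ∫ ω, θr ω ∂μ = π ⬝ᵥ θ)
    (hE : ∀ k, ∫ ω, θhat ω k ∂μ = θ k + ψ k)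
    (Sig : Matrix (Fin K) (Fin K) ℝ) (hSig : Sig.PosDef)
    (κ : ℝ) (hκ : κ ≠ 0) (hSπ : Sig *ᵥ π = κ • ψ) (hπψ : π ⬝ᵥ ψ ≠ 0) :
    ∀ k, (∫ ω,
        (θhat ω - ((π ⬝ᵥ θhat ω - θr ω) * (π ⬝ᵥ (Sig *ᵥ π))⁻¹) • (Sig *ᵥ π)) k ∂μ)
      = θ k := by
  intro k
  have hvk : (Sig *ᵥ π) k = κ * ψ k := by rw [hSπ]; simp [smul_eq_mul]
  have hc : π ⬝ᵥ (Sig *ᵥ π) = κ * (π ⬝ᵥ ψ) := by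
    rw [hSπ, dotProduct_smul, smul_eq_mul]
  have hdot : Integrable (fun ω => π ⬝ᵥ θhat ω) μ := by
    simp only [dotProduct]
    exact integrable_finset_sum _ (fun i _ => ((hint i).const_mul (π i)))
  have hEdot : ∫ ω, π ⬝ᵥ θhat ω ∂μ = π ⬝ᵥ θ + π ⬝ᵥ ψ := by
    simp only [dotProduct]
    rw [integral_finset_sum _ (fun i _ => ((hint i).const_mul (π i)))]
    simp_rw [integral_const_mul, hE, mul_add, Finset.sum_add_distrib]
  have heq : ∀ ω, (θhat ω - ((π ⬝ᵥ θhat ω - θr ω) * (π ⬝ᵥ (Sig *ᵥ π))⁻¹) • (Sig *ᵥ π)) k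
      = θhat ω k - (π ⬝ᵥ θhat ω - θr ω) * ((π ⬝ᵥ (Sig *ᵥ π))⁻¹ * (Sig *ᵥ π) k) := by
    intro ω
    simp [Pi.sub_apply, Pi.smul_apply, smul_eq_mul, mul_assoc]
  have hint2 : Integrable
      (fun ω => (π ⬝ᵥ θhat ω - θr ω) * ((π ⬝ᵥ (Sig *ᵥ π))⁻¹ * (Sig *ᵥ π) k)) μ :=
    (hdot.sub hintr).mul_const _
  have hintsub : Integrable (fun ω => π ⬝ᵥ θhat ω - θr ω) μ := hdot.sub hintr
  simp_rw [heq]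
  rw [integral_sub (hint k) hint2, integral_mul_const,
    integral_sub hdot hintr, hEdot, hEr, hE, hc, hvk]
  field_simp
  ring
end
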